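/- For any lists p and y* over a type α with decidable equality, if k is an index with 0 ≤ k ≤ |y*| such that D(p, y*_{<k}) = min over 0 ≤ j ≤ |y*| of D(p, y*_{<j}) = m, then completing p with the suffix y*_{≥k} achieves exactly this bound: D(p ++ y*_{≥k}, y*) = m. -/

import Mathlib

/-!
Appending a common suffix never increases the edit distance, so
`D(p ++ y*_{≥k}, y*) ≤ D(p ++ y*_{≥k}, y*_{<k} ++ y*_{≥k}) ≤ D(p, y*_{<k}) = m`. Conversely, in an
optimal alignment of `p ++ s` with any `y`, the part of `y` aligned with `p` is a prefix `y_{<j}`,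
so `D(p ++ s, y) ≥ D(p, y_{<j}) ≥ m`; this is proved by induction along the edit-distance
recursion.
-/

/-- Costs for the edit operations (as in the former `Mathlib.Data.List.EditDistance.Defs`). -/
structure Levenshtein.Cost (α β δ : Type*) where
  delete : α → δ
  insert : β → δ
  substitute : α → β → δ

/-- The default unit cost function (as in the former Mathlib). -/
def Levenshtein.defaultCost {α : Type*} [DecidableEq α] : Levenshtein.Cost α α ℕ where
  delete _ := 1
  insert _ := 1
  substitute a b := if a = b then 0 else 1

/-- One row step of the dynamic program (as in the former Mathlib). -/
def Levenshtein.impl {α β δ : Type*} [AddZeroClass δ] [Min δ] (C : Levenshtein.Cost α β δ)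
    (xs : List α) (y : β) (d : {r : List δ // 0 < r.length}) : {r : List δ // 0 < r.length} :=
  let ⟨ds, w⟩ := d
  xs.zip (ds.zip ds.tail) |>.foldr
    (init := ⟨[C.insert y + ds.getLast (List.ne_nil_of_length_pos w)], by simp⟩)
    (fun ⟨x, d₀, d₁⟩ ⟨r, w⟩ =>
      ⟨min (C.delete x + r[0]) (min (C.insert y + d₀) (C.substitute x y + d₁)) :: r, by simp⟩)

/-- Edit distances between all suffixes (as in the former Mathlib). -/
def suffixLevenshtein {α β δ : Type*} [AddZeroClass δ] [Min δ] (C : Levenshtein.Cost α β δ)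
    (xs : List α) (ys : List β) : {r : List δ // 0 < r.length} :=
  ys.foldr
    (Levenshtein.impl C xs)
    (xs.foldr (init := ⟨[0], by simp⟩) (fun a ⟨ds, w⟩ => ⟨(C.delete a + ds[0]) :: ds, by simp⟩))

/-- Levenshtein distance with cost function `C` (as in the former Mathlib). -/
def levenshtein {α β δ : Type*} [AddZeroClass δ] [Min δ] (C : Levenshtein.Cost α β δ)
    (xs : List α) (ys : List β) : δ :=
  let ⟨r, w⟩ := suffixLevenshtein C xs ys
  r[0]

/-- Unit-cost Levenshtein edit distance between two lists. -/
def editDist {α : Type*} [DecidableEq α] (u v : List α) : ℕ :=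
  levenshtein Levenshtein.defaultCost u v

/-- `rowMin p y = min over 0 ≤ j ≤ |y|` of the edit distance between `p` and `y.take j`. -/
def rowMin {α : Type*} [DecidableEq α] (p y : List α) : ℕ :=
  (Finset.range (y.length + 1)).inf' (by simp) (fun j => editDist p (y.take j))

section Recursion

variable {α β δ : Type*} [AddZeroClass δ] [Min δ] (C : Levenshtein.Cost α β δ)

theorem Levenshtein.impl_cons {x : α} {xs : List α} {y : β} {d : δ} {ds : List δ} (w)
    (w' : 0 < ds.length) :
    Levenshtein.impl C (x :: xs) y ⟨d :: ds, w⟩ =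
      let ⟨r, w⟩ := Levenshtein.impl C xs y ⟨ds, w'⟩
      ⟨min (C.delete x + r[0]) (min (C.insert y + d) (C.substitute x y + ds[0])) :: r, by simp⟩ :=
  match ds, w' with | _ :: _, _ => rfl

theorem Levenshtein.impl_length {xs : List α} {y : β} (d : {r : List δ // 0 < r.length})
    (w : d.1.length = xs.length + 1) :
    (Levenshtein.impl C xs y d).1.length = xs.length + 1 := by
  induction xs generalizing d with
  | nil => rfl
  | cons x xs ih =>
    match d, w with
    | ⟨_ :: d₂ :: ds, _⟩, w =>
      dsimp [Levenshtein.impl]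
      congr 1
      exact ih ⟨d₂ :: ds, by simp⟩ (by simpa using w)

theorem suffixLevenshtein_length (xs : List α) (ys : List β) :
    (suffixLevenshtein C xs ys).1.length = xs.length + 1 := by
  induction ys with
  | nil =>
    induction xs with
    | nil => rfl
    | cons _ xs ih => simpa [suffixLevenshtein] using ih
  | cons y ys ih => exact Levenshtein.impl_length C _ ih

omit [AddZeroClass δ] [Min δ] in
theorem nonemptyList_ext_of_head_tail {x y : {r : List δ // 0 < r.length}}
    (head : x.1[0]'x.2 = y.1[0]'y.2) (tail : x.1.tail = y.1.tail) : x = y :=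
  match x, y with
  | ⟨_ :: _, _⟩, ⟨_ :: _, _⟩ => by simp_all

theorem suffixLevenshtein_cons_left (x : α) (xs : List α) (ys : List β) :
    suffixLevenshtein C (x :: xs) ys =
      ⟨levenshtein C (x :: xs) ys :: (suffixLevenshtein C xs ys).1, by simp⟩ := by
  induction ys with
  | nil => rfl
  | cons y ys ih =>
    apply nonemptyList_ext_of_head_tail
    · rfl
    · change (Levenshtein.impl C (x :: xs) y (suffixLevenshtein C (x :: xs) ys)).1.tail = _
      rw [ih, Levenshtein.impl_cons (w' := by simp [suffixLevenshtein_length])]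
      rfl

@[simp]
theorem levenshtein_nil_nil : levenshtein C [] [] = 0 := by
  simp [levenshtein, suffixLevenshtein]

@[simp]
theorem levenshtein_nil_cons (y : β) (ys : List β) :
    levenshtein C [] (y :: ys) = C.insert y + levenshtein C [] ys := by
  have hl := suffixLevenshtein_length C [] ys
  change (Levenshtein.impl C [] y (suffixLevenshtein C [] ys)).1[0]'(Levenshtein.impl ..).2 =
    C.insert y + (suffixLevenshtein C [] ys).1[0]'(suffixLevenshtein ..).2
  generalize suffixLevenshtein C [] ys = d at hl ⊢
  match d, hl with
  | ⟨[_], _⟩, _ => rfl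

@[simp]
theorem levenshtein_cons_nil (x : α) (xs : List α) :
    levenshtein C (x :: xs) [] = C.delete x + levenshtein C xs [] :=
  rfl

@[simp]
theorem levenshtein_cons_cons (x : α) (xs : List α) (y : β) (ys : List β) :
    levenshtein C (x :: xs) (y :: ys) =
      min (C.delete x + levenshtein C xs (y :: ys))
        (min (C.insert y + levenshtein C (x :: xs) ys)
          (C.substitute x y + levenshtein C xs ys)) := by
  have hl : 0 < (suffixLevenshtein C xs ys).1.length := by simp [suffixLevenshtein_length]
  have key := congrArg (fun r => r.1[0]?) (suffixLevenshtein_cons_left C x xs (y :: ys))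
  change (Levenshtein.impl C (x :: xs) y (suffixLevenshtein C (x :: xs) ys)).1[0]? = _ at key
  rw [suffixLevenshtein_cons_left, Levenshtein.impl_cons (w' := hl)] at key
  simp only [List.getElem?_cons_zero, Option.some.injEq] at key
  exact key.symm

end Recursion

section UnitCost

variable {α : Type*} [DecidableEq α]

theorem editDist_nil_cons (y : α) (v : List α) : editDist [] (y :: v) = 1 + editDist [] v :=
  levenshtein_nil_cons ..

theorem editDist_cons_nil (x : α) (u : List α) : editDist (x :: u) [] = 1 + editDist u [] :=
  levenshtein_cons_nil ..

theorem editDist_nil_right (u : List α) : editDist u [] = u.length := by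
  induction u with
  | nil => simp [editDist]
  | cons x u ih => rw [editDist_cons_nil, ih, List.length_cons, Nat.add_comm]

theorem editDist_cons_cons (x : α) (u : List α) (y : α) (v : List α) :
    editDist (x :: u) (y :: v) =
      min (1 + editDist u (y :: v))
        (min (1 + editDist (x :: u) v) ((if x = y then 0 else 1) + editDist u v)) :=
  levenshtein_cons_cons ..

theorem editDist_cons_left_le (x : α) (u v : List α) :
    editDist (x :: u) v ≤ 1 + editDist u v := by
  cases v with
  | nil => exact (editDist_cons_nil ..).le
  | cons y v => exact (editDist_cons_cons ..).trans_le (min_le_left _ _)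

theorem editDist_cons_right_le (u : List α) (y : α) (v : List α) :
    editDist u (y :: v) ≤ 1 + editDist u v := by
  cases u with
  | nil => exact (editDist_nil_cons ..).le
  | cons x u => exact (editDist_cons_cons ..).trans_le ((min_le_right _ _).trans (min_le_left _ _))

theorem editDist_cons_cons_le (x : α) (u : List α) (y : α) (v : List α) :
    editDist (x :: u) (y :: v) ≤ (if x = y then 0 else 1) + editDist u v :=
  (editDist_cons_cons ..).trans_le ((min_le_right _ _).trans (min_le_right _ _))

theorem editDist_self (w : List α) : editDist w w = 0 := by
  induction w with
  | nil => simp [editDist]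
  | cons x w ih => simpa [ih] using editDist_cons_cons_le x w x w

theorem editDist_append_right_le : ∀ u v w : List α, editDist (u ++ w) (v ++ w) ≤ editDist u v
  | [], [], w => by simp [editDist_self]
  | [], y :: v, w => calc
      editDist w (y :: (v ++ w)) ≤ 1 + editDist ([] ++ w) (v ++ w) := editDist_cons_right_le ..
      _ ≤ 1 + editDist [] v := by grw [editDist_append_right_le [] v w]
      _ = editDist [] (y :: v) := (editDist_nil_cons ..).symm
  | x :: u, [], w => calc
      editDist (x :: (u ++ w)) w ≤ 1 + editDist (u ++ w) ([] ++ w) := editDist_cons_left_le ..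
      _ ≤ 1 + editDist u [] := by grw [editDist_append_right_le u [] w]
      _ = editDist (x :: u) [] := (editDist_cons_nil ..).symm
  | x :: u, y :: v, w => by
    rw [editDist_cons_cons]
    refine le_min ?_ (le_min ?_ ?_)
    · grw [← editDist_append_right_le u (y :: v) w]
      exact editDist_cons_left_le ..
    · grw [← editDist_append_right_le (x :: u) v w]
      exact editDist_cons_right_le ..
    · grw [← editDist_append_right_le u v w]
      exact editDist_cons_cons_le ..

theorem exists_editDist_take_le_editDist_append (u s y : List α) :
    ∃ j ≤ y.length, editDist u (y.take j) ≤ editDist (u ++ s) y := by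
  induction u generalizing y with
  | nil => exact ⟨0, Nat.zero_le _, by simp [editDist]⟩
  | cons x u ihu =>
    induction y with
    | nil => exact ⟨0, le_rfl, by simp [editDist_nil_right]⟩
    | cons b y ihy =>
      rw [List.cons_append, editDist_cons_cons]
      let P d := ∃ j ≤ (b :: y).length, editDist (x :: u) ((b :: y).take j) ≤ d
      refine min_rec' P ?delete (min_rec' P ?insert ?substitute)
      case delete =>
        obtain ⟨j, hj, hle⟩ := ihu (b :: y)
        exact ⟨j, hj, (editDist_cons_left_le ..).trans (by omega)⟩
      case insert =>
        obtain ⟨j, hj, hle⟩ := ihy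
        rw [List.cons_append] at hle
        refine ⟨j + 1, by simpa using hj, ?_⟩
        rw [List.take_succ_cons]
        exact (editDist_cons_right_le ..).trans (by omega)
      case substitute =>
        obtain ⟨j, hj, hle⟩ := ihu y
        refine ⟨j + 1, by simpa using hj, ?_⟩
        rw [List.take_succ_cons]
        exact (editDist_cons_cons_le ..).trans (by omega)

theorem rowMin_le_editDist_take (p y : List α) {j : ℕ} (hj : j ≤ y.length) :
    rowMin p y ≤ editDist p (y.take j) :=
  Finset.inf'_le _ (Finset.mem_range_succ_iff.mpr hj)

theorem rowMin_le_editDist_append (p s y : List α) : rowMin p y ≤ editDist (p ++ s) y :=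
  let ⟨_, hj, hle⟩ := exists_editDist_take_le_editDist_append p s y
  (rowMin_le_editDist_take p y hj).trans hle

end UnitCost

theorem suffix_completion_achieves_rowMin_general {α : Type*} [DecidableEq α]
    (p ystar : List α) (k : ℕ)
    (h : editDist p (ystar.take k) = rowMin p ystar) :
    editDist (p ++ ystar.drop k) ystar = rowMin p ystar := by
  refine le_antisymm ?_ (rowMin_le_editDist_append p _ ystar)
  calc editDist (p ++ ystar.drop k) ystar
      = editDist (p ++ ystar.drop k) (ystar.take k ++ ystar.drop k) := by
        rw [List.take_append_drop]
    _ ≤ editDist p (ystar.take k) := editDist_append_right_le ..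
    _ = rowMin p ystar := h

theorem suffix_completion_achieves_rowMin {α : Type*} [DecidableEq α]
    (p ystar : List α) (k : ℕ) (hk : k ≤ ystar.length)
    (h : editDist p (ystar.take k) = rowMin p ystar) :
    editDist (p ++ ystar.drop k) ystar = rowMin p ystar :=
  suffix_completion_achieves_rowMin_general p ystar k h
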